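/- Let (B^1,i^1,j^1) be an ADHM datum on (V^1,W) and (B^2,i^2,j^2) an ADHM datum on (V^2,W). (a) If (B^1,i^1,j^1) is stable, then every intertwiner ξ from (B^1,i^1,j^1) to (B^2,i^2,j^2) is injective (each ξ_k is injective). (b) If (B^2,i^2,j^2) is stable, then there exists at most one intertwiner from (B^1,i^1,j^1) to (B^2,i^2,j^2). -/

import Mathlib

noncomputable section

/-- The data of a finite graph without edge loops, presented by its set `H` of oriented
edges over the vertex set `I`: source and target maps `src`, `tgt`, and a fixed-point-free
orientation-reversing involution `bar`. -/
structure GraphData (I H : Type) where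
  src : H → I
  tgt : H → I
  bar : H → H
  bar_invol : ∀ h, bar (bar h) = h
  bar_ne_self : ∀ h, bar h ≠ h
  src_bar : ∀ h, src (bar h) = tgt h
  tgt_bar : ∀ h, tgt (bar h) = src h
  no_loops : ∀ h, src h ≠ tgt h

/-- Transport of the fibres of a family of normed spaces along an equality of indices. -/
def vCast {I : Type} (V : I → Type)
    [∀ k, NormedAddCommGroup (V k)] [∀ k, NormedSpace ℂ (V k)]
    {k l : I} (e : k = l) : V k ≃L[ℂ] V l := by
  subst e
  exact ContinuousLinearEquiv.refl ℂ (V k)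

/-- Stability of an ADHM datum `(B, i, j)`: the only family of subspaces `S k ⊆ V k`
which is `B`-invariant and contained in `ker (j k)` is the zero family. -/
def IsStable {I H : Type} (G : GraphData I H) (V W : I → Type)
    [∀ k, NormedAddCommGroup (V k)] [∀ k, NormedSpace ℂ (V k)]
    [∀ k, NormedAddCommGroup (W k)] [∀ k, NormedSpace ℂ (W k)]
    (B : ∀ h : H, V (G.src h) →L[ℂ] V (G.tgt h))
    (j : ∀ k : I, V k →L[ℂ] W k) : Prop :=
  ∀ S : ∀ k : I, Submodule ℂ (V k),
    (∀ h : H, ∀ x ∈ S (G.src h), B h x ∈ S (G.tgt h)) →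
    (∀ k : I, ∀ x ∈ S k, j k x = 0) →
    ∀ k : I, S k = ⊥

/-- An intertwiner `ξ` from the ADHM datum `(B¹, i¹, j¹)` on `(V¹, W)` to the ADHM datum
`(B², i², j²)` on `(V², W)`. -/
def IsIntertwiner {I H : Type} (G : GraphData I H) (V1 V2 W : I → Type)
    [∀ k, NormedAddCommGroup (V1 k)] [∀ k, NormedSpace ℂ (V1 k)]
    [∀ k, NormedAddCommGroup (V2 k)] [∀ k, NormedSpace ℂ (V2 k)]
    [∀ k, NormedAddCommGroup (W k)] [∀ k, NormedSpace ℂ (W k)]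
    (B1 : ∀ h : H, V1 (G.src h) →L[ℂ] V1 (G.tgt h))
    (i1 : ∀ k : I, W k →L[ℂ] V1 k) (j1 : ∀ k : I, V1 k →L[ℂ] W k)
    (B2 : ∀ h : H, V2 (G.src h) →L[ℂ] V2 (G.tgt h))
    (i2 : ∀ k : I, W k →L[ℂ] V2 k) (j2 : ∀ k : I, V2 k →L[ℂ] W k)
    (ξ : ∀ k : I, V1 k →L[ℂ] V2 k) : Prop :=
  (∀ h : H, (ξ (G.tgt h)).comp (B1 h) = (B2 h).comp (ξ (G.src h))) ∧
  (∀ k : I, (ξ k).comp (i1 k) = i2 k) ∧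
  (∀ k : I, j1 k = (j2 k).comp (ξ k))

/-- (a) If `(B¹,i¹,j¹)` is stable, every intertwiner to `(B²,i²,j²)`
is (componentwise) injective. (b) If `(B²,i²,j²)` is stable, there is at most one
intertwiner from `(B¹,i¹,j¹)` to `(B²,i²,j²)`. -/
theorem statement10
    {I H : Type} [Fintype I] [Fintype H] [DecidableEq I]
    (G : GraphData I H) (V1 V2 W : I → Type)
    [∀ k, NormedAddCommGroup (V1 k)] [∀ k, NormedSpace ℂ (V1 k)]
    [∀ k, FiniteDimensional ℂ (V1 k)]
    [∀ k, NormedAddCommGroup (V2 k)] [∀ k, NormedSpace ℂ (V2 k)]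
    [∀ k, FiniteDimensional ℂ (V2 k)]
    [∀ k, NormedAddCommGroup (W k)] [∀ k, NormedSpace ℂ (W k)]
    [∀ k, FiniteDimensional ℂ (W k)]
    (B1 : ∀ h : H, V1 (G.src h) →L[ℂ] V1 (G.tgt h))
    (i1 : ∀ k : I, W k →L[ℂ] V1 k) (j1 : ∀ k : I, V1 k →L[ℂ] W k)
    (B2 : ∀ h : H, V2 (G.src h) →L[ℂ] V2 (G.tgt h))
    (i2 : ∀ k : I, W k →L[ℂ] V2 k) (j2 : ∀ k : I, V2 k →L[ℂ] W k) :
    (IsStable G V1 W B1 j1 →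
      ∀ ξ : ∀ k : I, V1 k →L[ℂ] V2 k,
        IsIntertwiner G V1 V2 W B1 i1 j1 B2 i2 j2 ξ →
        ∀ k : I, Function.Injective (ξ k)) ∧
    (IsStable G V2 W B2 j2 →
      ∀ ξ ξ' : ∀ k : I, V1 k →L[ℂ] V2 k,
        IsIntertwiner G V1 V2 W B1 i1 j1 B2 i2 j2 ξ →
        IsIntertwiner G V1 V2 W B1 i1 j1 B2 i2 j2 ξ' →
        ξ = ξ') := by
  constructor
  · rintro hS ξ ⟨hB, hi, hj⟩ k
    have hk := hS (fun k => LinearMap.ker ((ξ k : V1 k →ₗ[ℂ] V2 k)))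
      (fun h x hx => by
        have := congrArg (fun f => f x) (hB h)
        simp only [ContinuousLinearMap.coe_comp', Function.comp_apply] at this
        simp only [LinearMap.mem_ker, ContinuousLinearMap.coe_coe] at hx ⊢
        rw [this, hx, map_zero])
      (fun k x hx => by
        have := congrArg (fun f => f x) (hj k)
        simp only [ContinuousLinearMap.coe_comp', Function.comp_apply] at this
        simp only [LinearMap.mem_ker, ContinuousLinearMap.coe_coe] at hx
        rw [this, hx, map_zero])
    intro a b hab
    have : a - b ∈ LinearMap.ker ((ξ k : V1 k →ₗ[ℂ] V2 k)) := by
      simp [LinearMap.mem_ker, map_sub, hab]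
    rw [hk k, Submodule.mem_bot] at this
    exact sub_eq_zero.mp this
  · rintro hS ξ ξ' ⟨hB, hi, hj⟩ ⟨hB', hi', hj'⟩
    have key := hS (fun k => LinearMap.range ((ξ k - ξ' k : V1 k →L[ℂ] V2 k) : V1 k →ₗ[ℂ] V2 k))
      (fun h x hx => by
        obtain ⟨y, rfl⟩ := hx
        refine ⟨B1 h y, ?_⟩
        have e1 := congrArg (fun f => f y) (hB h)
        have e2 := congrArg (fun f => f y) (hB' h)
        simp only [ContinuousLinearMap.coe_comp', Function.comp_apply] at e1 e2
        simp only [ContinuousLinearMap.coe_coe, ContinuousLinearMap.sub_apply]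
        rw [e1, e2, map_sub])
      (fun k x hx => by
        obtain ⟨y, rfl⟩ := hx
        have e1 := congrArg (fun f => f y) (hj k)
        have e2 := congrArg (fun f => f y) (hj' k)
        simp only [ContinuousLinearMap.coe_comp', Function.comp_apply] at e1 e2
        simp only [ContinuousLinearMap.coe_coe, ContinuousLinearMap.sub_apply, map_sub]
        rw [← e1, ← e2, sub_self])
    funext k
    ext x
    have : (ξ k - ξ' k) x ∈ (⊥ : Submodule ℂ (V2 k)) := by
      rw [← key k]; exact ⟨x, rfl⟩
    rw [Submodule.mem_bot, ContinuousLinearMap.sub_apply, sub_eq_zero] at this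
    exact this
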